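/- arXiv:1607.05347 — 2 statements merged into one kernel-verified Lean document; each statement's English description precedes it below -/
import Mathlib

section
/- Let L be a finite nonempty set of lines in ℝ² and let c ⊆ ℝ² be a convex set with c ∩ (∪L) = ∅, such that for every a ∈ c the set {t > 0 : a − t·(1,0) ∈ ∪L} is nonempty (some line of L is hit by the leftward horizontal ray from a). Define g(a) = inf{t > 0 : a − t·(1,0) ∈ ∪L}, the horizontal distance from a to the nearest line of L to its left. Then there exist finitely many affine functions h₁, …, h_m : ℝ² → ℝ such that g(a) = min_{1 ≤ i ≤ m} h_i(a) for every a ∈ c; in particular, g is concave and piecewise linear on c. -/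
/-- A line in ℝ²: a one-dimensional affine subspace of ℝ². -/
def IsLine (l : Set (ℝ × ℝ)) : Prop :=
  ∃ s : AffineSubspace ℝ (ℝ × ℝ), (s : Set (ℝ × ℝ)) = l ∧ Module.finrank ℝ s.direction = 1

/-- Parameterize hitting times of the leftward ray for a non-horizontal line. -/
lemma line_param (s : AffineSubspace ℝ (ℝ × ℝ)) (hs : Module.finrank ℝ s.direction = 1)
    (q : ℝ × ℝ) (hq : q ∈ s) (hdir : ((1 : ℝ), (0 : ℝ)) ∉ s.direction) :
    ∃ τ : (ℝ × ℝ) →ᵃ[ℝ] ℝ, ∀ x t, (x - t • ((1 : ℝ), (0 : ℝ)) ∈ s ↔ t = τ x) := by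
  obtain ⟨v, hv0, hv⟩ := finrank_eq_one_iff'.mp hs
  set d : ℝ × ℝ := (v : ℝ × ℝ) with hd
  have hdspan : ∀ w : ℝ × ℝ, w ∈ s.direction ↔ ∃ r : ℝ, r • d = w := by
    intro w
    constructor
    · intro hw
      obtain ⟨r, hr⟩ := hv ⟨w, hw⟩
      exact ⟨r, congrArg Subtype.val hr⟩
    · rintro ⟨r, rfl⟩
      exact Submodule.smul_mem _ r v.2
  have hd2 : d.2 ≠ 0 := by
    intro h2
    have hd1 : d.1 ≠ 0 := by
      intro h1
      apply hv0
      apply Subtype.ext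
      simp only [hd] at h1 h2 ⊢
      exact Prod.ext h1 h2
    apply hdir
    rw [hdspan]
    exact ⟨d.1⁻¹, by rw [Prod.smul_mk (d.1⁻¹) d.1 d.2] at *; exact Prod.ext (by field_simp; simp [hd1]) (by simp [h2])⟩
  set ψ : (ℝ × ℝ) →ₗ[ℝ] ℝ := LinearMap.fst ℝ ℝ ℝ - (d.1 / d.2) • LinearMap.snd ℝ ℝ ℝ with hψ
  have hψval : ∀ w : ℝ × ℝ, ψ w = w.1 - (d.1 / d.2) * w.2 := fun w => rfl
  refine ⟨⟨fun x => ψ (x - q), ψ, ?_⟩, ?_⟩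
  · intro p w
    show ψ (w + p - q) = ψ w + ψ (p - q)
    rw [add_sub_assoc, map_add]
  · intro x t
    simp only [AffineMap.coe_mk]
    have hmem : x - t • ((1 : ℝ), (0 : ℝ)) ∈ s ↔ (x - t • ((1 : ℝ), (0 : ℝ))) - q ∈ s.direction := by
      rw [← AffineSubspace.vsub_right_mem_direction_iff_mem hq]
      rfl
    rw [hmem, hdspan]
    constructor
    · rintro ⟨r, hr⟩
      have h1 : r * d.1 = x.1 - t - q.1 := by
        have := congrArg Prod.fst hr; simpa using this
      have h2 : r * d.2 = x.2 - q.2 := by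
        have := congrArg Prod.snd hr; simpa using this
      have hr2 : r = (x.2 - q.2) / d.2 := by field_simp [← h2]; exact h2
      rw [hψval]
      simp only [Prod.fst_sub, Prod.snd_sub]
      rw [hr2] at h1
      have hkey : d.1 / d.2 * (x.2 - q.2) = (x.2 - q.2) / d.2 * d.1 := by ring
      linarith
    · intro ht
      refine ⟨(x.2 - q.2) / d.2, ?_⟩
      apply Prod.ext
      · show (x.2 - q.2) / d.2 * d.1 = (x - t • ((1:ℝ),(0:ℝ)) - q).1
        simp only [Prod.fst_sub, Prod.smul_mk, smul_eq_mul, mul_one]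
        rw [ht, hψval]
        simp only [Prod.fst_sub, Prod.snd_sub]
        field_simp
        ring
      · show (x.2 - q.2) / d.2 * d.2 = (x - t • ((1:ℝ),(0:ℝ)) - q).2
        simp only [Prod.snd_sub, Prod.smul_mk, smul_eq_mul, mul_zero]
        field_simp
        ring

theorem stmt_0 (L : Set (Set (ℝ × ℝ))) (hLfin : L.Finite) (hLne : L.Nonempty)
    (hlines : ∀ l ∈ L, IsLine l)
    (c : Set (ℝ × ℝ)) (hc : Convex ℝ c) (hdisj : c ∩ ⋃₀ L = ∅)
    (hhit : ∀ a ∈ c, {t : ℝ | 0 < t ∧ a - t • ((1 : ℝ), (0 : ℝ)) ∈ ⋃₀ L}.Nonempty)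
    (g : ℝ × ℝ → ℝ)
    (hg : ∀ a, g a = sInf {t : ℝ | 0 < t ∧ a - t • ((1 : ℝ), (0 : ℝ)) ∈ ⋃₀ L}) :
    (∃ m : ℕ, ∃ h : Fin (m + 1) → ((ℝ × ℝ) →ᵃ[ℝ] ℝ),
      ∀ a ∈ c, g a = ⨅ i, h i a) ∧ ConcaveOn ℝ c g := by
  classical
  rcases Set.eq_empty_or_nonempty c with hce | ⟨a₀, ha₀⟩
  · refine ⟨⟨0, fun _ => AffineMap.const ℝ (ℝ × ℝ) 0, ?_⟩, hc, ?_⟩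
    · intro a ha; rw [hce] at ha; exact absurd ha (Set.notMem_empty a)
    · intro x hx; rw [hce] at hx; exact absurd hx (Set.notMem_empty x)
  have hnotin : ∀ a ∈ c, a ∉ ⋃₀ L := by
    intro a ha hal
    have : a ∈ c ∩ ⋃₀ L := ⟨ha, hal⟩
    rw [hdisj] at this
    exact this
  set S : Set (Set (ℝ × ℝ)) :=
    {l ∈ L | ∃ x ∈ c, ∃ t : ℝ, 0 < t ∧ x - t • ((1 : ℝ), (0 : ℝ)) ∈ l} with hS
  -- for each line in S, an affine parametrization, positive on c
  have hτ : ∀ l ∈ S, ∃ τ : (ℝ × ℝ) →ᵃ[ℝ] ℝ,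
      (∀ x t, (x - t • ((1 : ℝ), (0 : ℝ)) ∈ l ↔ t = τ x)) ∧ ∀ a ∈ c, 0 < τ a := by
    rintro l ⟨hlL, x, hx, t, ht, hxt⟩
    obtain ⟨s, hsl, hrank⟩ := hlines l hlL
    have hqs : x - t • ((1 : ℝ), (0 : ℝ)) ∈ s := by rw [← hsl] at hxt; exact hxt
    have hdir : ((1 : ℝ), (0 : ℝ)) ∉ s.direction := by
      intro hdd
      have hxs : x ∈ s := by
        have := AffineSubspace.vadd_mem_of_mem_direction
          (Submodule.smul_mem _ t hdd) hqs
        have hxe : t • ((1 : ℝ), (0 : ℝ)) +ᵥ (x - t • ((1 : ℝ), (0 : ℝ))) = x := by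
          show t • ((1 : ℝ), (0 : ℝ)) + (x - t • ((1 : ℝ), (0 : ℝ))) = x
          abel
        rwa [hxe] at this
      exact hnotin x hx ⟨l, hlL, by rw [← hsl]; exact hxs⟩
    obtain ⟨τ, hτiff⟩ := line_param s hrank _ hqs hdir
    have hiff : ∀ y u, (y - u • ((1 : ℝ), (0 : ℝ)) ∈ l ↔ u = τ y) := by
      intro y u; rw [← hsl]; exact hτiff y u
    refine ⟨τ, hiff, ?_⟩
    have hτx : τ x = t := ((hiff x t).mp hxt).symm
    intro a ha
    have hamem : ∀ u : ℝ, u = τ a → a - u • ((1 : ℝ), (0 : ℝ)) ∈ l := fun u hu => (hiff a u).mpr hu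
    have hτa0 : τ a ≠ 0 := by
      intro h0
      have : a - (0 : ℝ) • ((1 : ℝ), (0 : ℝ)) ∈ l := hamem 0 h0.symm
      simp only [zero_smul, sub_zero] at this
      exact hnotin a ha ⟨l, hlL, this⟩
    by_contra hle
    push_neg at hle
    have hτaneg : τ a < 0 := lt_of_le_of_ne hle hτa0
    set w : ℝ := τ x / (τ x - τ a) with hw
    have hwpos : 0 < w := div_pos (by rw [hτx]; exact ht) (by linarith [hτx ▸ ht])
    have hwlt : w ≤ 1 := by
      rw [hw, div_le_one (by linarith [hτx ▸ ht])]
      linarith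
    have hm : (1 - w) • x + w • a ∈ c := hc hx ha (by linarith) (le_of_lt hwpos) (by ring)
    have hτm : τ ((1 - w) • x + w • a) = (1 - w) * τ x + w * τ a :=
      Convex.combo_affine_apply (by ring)
    have hτm0 : τ ((1 - w) • x + w • a) = 0 := by
      rw [hτm, hw]
      have hne : τ x - τ a ≠ 0 := by intro h0; rw [hτx] at h0; linarith
      field_simp
      ring
    have : (1 - w) • x + w • a ∈ l := by
      have := (hiff ((1 - w) • x + w • a) 0).mpr hτm0.symm
      simpa using this
    exact hnotin _ hm ⟨l, hlL, this⟩
  choose! τf hτf1 hτf2 using hτ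
  -- S is finite and nonempty
  have hSfin : S.Finite := hLfin.subset (fun l hl => hl.1)
  have hSne : S.Nonempty := by
    obtain ⟨t₀, ht₀, l₀, hl₀, hml₀⟩ := hhit a₀ ha₀
    exact ⟨l₀, hl₀, a₀, ha₀, t₀, ht₀, hml₀⟩
  haveI : Fintype S := hSfin.fintype
  haveI : Nonempty S := hSne.to_subtype
  obtain ⟨m, hm⟩ : ∃ m : ℕ, Fintype.card S = m + 1 :=
    Nat.exists_eq_succ_of_ne_zero Fintype.card_ne_zero
  let eqv : S ≃ Fin (m + 1) := (Fintype.equivFin S).trans (finCongr hm)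
  set h : Fin (m + 1) → ((ℝ × ℝ) →ᵃ[ℝ] ℝ) := fun i => τf (eqv.symm i : Set (ℝ × ℝ)) with hh
  -- key: the hitting-time set is exactly the range of the h i's
  have hkey : ∀ a ∈ c,
      {t : ℝ | 0 < t ∧ a - t • ((1 : ℝ), (0 : ℝ)) ∈ ⋃₀ L} = Set.range fun i => h i a := by
    intro a ha
    ext t
    constructor
    · rintro ⟨ht, l, hlL, hml⟩
      have hlS : l ∈ S := ⟨hlL, a, ha, t, ht, hml⟩
      have : t = τf l a := (hτf1 l hlS a t).mp hml
      refine ⟨eqv ⟨l, hlS⟩, ?_⟩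
      simp only [hh, Equiv.symm_apply_apply]
      exact this.symm
    · rintro ⟨i, rfl⟩
      have hlS := (eqv.symm i).2
      refine ⟨hτf2 _ hlS a ha, ((eqv.symm i : S) : Set (ℝ × ℝ)), hlS.1, ?_⟩
      exact (hτf1 _ hlS a _).mpr rfl
  refine ⟨⟨m, h, ?_⟩, hc, ?_⟩
  · intro a ha
    rw [hg a, hkey a ha]
    rfl
  · intro x hx y hy p q hp hq hpq
    have hz : p • x + q • y ∈ c := hc hx hy hp hq hpq
    obtain ⟨i₀, hi₀⟩ := exists_eq_ciInf_of_finite (f := fun i => h i (p • x + q • y))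
    have hgz : g (p • x + q • y) = h i₀ (p • x + q • y) := by
      rw [hg, hkey _ hz]
      exact hi₀.symm
    have hcombo : h i₀ (p • x + q • y) = p * h i₀ x + q * h i₀ y :=
      Convex.combo_affine_apply hpq
    have hgx : g x ≤ h i₀ x := by
      rw [hg, hkey x hx]
      exact csInf_le (Set.finite_range _).bddBelow ⟨i₀, rfl⟩
    have hgy : g y ≤ h i₀ y := by
      rw [hg, hkey y hy]
      exact csInf_le (Set.finite_range _).bddBelow ⟨i₀, rfl⟩
    have h1 : p * g x ≤ p * h i₀ x := mul_le_mul_of_nonneg_left hgx hp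
    have h2 : q * g y ≤ q * h i₀ y := mul_le_mul_of_nonneg_left hgy hq
    simp only [smul_eq_mul]
    rw [hgz, hcombo]
    linarith
end

section
/- Let L be a finite nonempty set of lines in ℝ² and let c ⊆ ℝ² be a convex set with c ∩ (∪L) = ∅, such that for every a ∈ c both sets {t > 0 : a − t·(1,0) ∈ ∪L} and {t > 0 : a − t·(0,1) ∈ ∪L} are nonempty. Define f(a) = g_left(a) + g_down(a), where g_left(a) = inf{t > 0 : a − t·(1,0) ∈ ∪L} is the horizontal distance from a to the nearest line of L to its left and g_down(a) = inf{t > 0 : a − t·(0,1) ∈ ∪L} is the vertical distance from a to the nearest line of L below it. Then f is concave on c, and for every ε ∈ ℝ the superlevel set {a ∈ c : f(a) ≥ ε} is convex. -/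
lemma line_rep {l : Set (ℝ × ℝ)} (hl : IsLine l) :
    ∃ α β γ : ℝ, ¬(α = 0 ∧ β = 0) ∧ l = {p : ℝ × ℝ | α * p.1 + β * p.2 = γ} := by
  obtain ⟨s, hs, hdim⟩ := hl
  have hsne : (s : Set (ℝ × ℝ)).Nonempty := by
    rw [AffineSubspace.nonempty_iff_ne_bot]
    intro h
    rw [h, AffineSubspace.direction_bot] at hdim
    simp [finrank_bot] at hdim
  obtain ⟨p0, hp0⟩ := hsne
  obtain ⟨d, hd0, hdspan⟩ := finrank_eq_one_iff'.mp hdim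
  have hdne : (d : ℝ × ℝ) ≠ 0 := by
    simpa using (Subtype.coe_injective.ne hd0)
  refine ⟨d.1.2, -d.1.1, d.1.2 * p0.1 + (-d.1.1) * p0.2, ?_, ?_⟩
  · rintro ⟨h1, h2⟩
    apply hdne
    have : (d : ℝ × ℝ).1 = 0 := by linarith [neg_eq_zero.mp h2]
    exact Prod.ext this h1
  · rw [← hs]
    ext p
    simp only [Set.mem_setOf_eq, SetLike.mem_coe]
    rw [← AffineSubspace.vsub_right_mem_direction_iff_mem hp0 p]
    constructor
    · intro hmem
      obtain ⟨t, ht⟩ := hdspan ⟨p -ᵥ p0, hmem⟩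
      have ht' : t • (d : ℝ × ℝ) = p -ᵥ p0 := by
        have := congrArg Subtype.val ht
        simpa using this
      have h1 : p.1 - p0.1 = t * (d : ℝ × ℝ).1 := by
        have := congrArg Prod.fst ht'
        simpa using this.symm
      have h2 : p.2 - p0.2 = t * (d : ℝ × ℝ).2 := by
        have := congrArg Prod.snd ht'
        simpa using this.symm
      linear_combination (d : ℝ × ℝ).2 * h1 - (d : ℝ × ℝ).1 * h2
    · intro heq
      by_cases hd1 : (d : ℝ × ℝ).1 = 0
      · have hd2 : (d : ℝ × ℝ).2 ≠ 0 := by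
          intro h; exact hdne (Prod.ext hd1 h)
        have h1 : p.1 = p0.1 := by
          rw [hd1] at heq
          simp at heq
          rcases heq with h | h
          · exact h
          · exact absurd h hd2
        have key : p -ᵥ p0 = ((p.2 - p0.2) / (d : ℝ × ℝ).2) • (d : ℝ × ℝ) := by
          apply Prod.ext
          · show p.1 - p0.1 = _
            simp [hd1, h1]
          · show p.2 - p0.2 = _
            simp only [Prod.smul_fst, Prod.smul_snd, smul_eq_mul]
            field_simp
        rw [key]
        exact Submodule.smul_mem _ _ d.2
      · have key : p -ᵥ p0 = ((p.1 - p0.1) / (d : ℝ × ℝ).1) • (d : ℝ × ℝ) := by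
          apply Prod.ext
          · show p.1 - p0.1 = _
            simp only [Prod.smul_fst, Prod.smul_snd, smul_eq_mul]
            field_simp
          · show p.2 - p0.2 = _
            simp only [Prod.smul_fst, Prod.smul_snd, smul_eq_mul]
            field_simp
            nlinarith [heq]
        rw [key]
        exact Submodule.smul_mem _ _ d.2

lemma g_concave (L : Set (Set (ℝ × ℝ))) (hlines : ∀ l ∈ L, IsLine l)
    (c : Set (ℝ × ℝ)) (hc : Convex ℝ c) (hdisj : c ∩ ⋃₀ L = ∅)
    (v : ℝ × ℝ)
    (hhit : ∀ a ∈ c, {t : ℝ | 0 < t ∧ a - t • v ∈ ⋃₀ L}.Nonempty) :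
    ConcaveOn ℝ c (fun a => sInf {t : ℝ | 0 < t ∧ a - t • v ∈ ⋃₀ L}) := by
  have hbdd : ∀ a : ℝ × ℝ, BddBelow {t : ℝ | 0 < t ∧ a - t • v ∈ ⋃₀ L} :=
    fun a => ⟨0, fun t ht => le_of_lt ht.1⟩
  have hnotin : ∀ p ∈ c, p ∉ ⋃₀ L := by
    intro p hp hpL
    have : p ∈ c ∩ ⋃₀ L := ⟨hp, hpL⟩
    rw [hdisj] at this
    exact this
  refine ⟨hc, ?_⟩
  intro a ha b hb w w' hw hw' hww
  simp only [smul_eq_mul]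
  set z := w • a + w' • b with hzdef
  have hz : z ∈ c := hc ha hb hw hw' hww
  apply le_csInf (hhit z hz)
  rintro t ⟨htpos, hmem⟩
  obtain ⟨l, hlL, hl⟩ := hmem
  obtain ⟨α, β, γ, hab, hrep⟩ := line_rep (hlines l hlL)
  set e : ℝ × ℝ → ℝ := fun p => α * p.1 + β * p.2 - γ with hedef
  set κ : ℝ := α * v.1 + β * v.2 with hκdef
  have hmem_iff : ∀ p : ℝ × ℝ, p ∈ l ↔ e p = 0 := by
    intro p
    rw [hrep]
    simp only [Set.mem_setOf_eq, hedef]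
    constructor <;> intro h <;> linarith
  have hene : ∀ p ∈ c, e p ≠ 0 := by
    intro p hp h
    exact hnotin p hp ⟨l, hlL, (hmem_iff p).mpr h⟩
  have hez : e z = t * κ := by
    have := (hmem_iff _).mp hl
    simp only [hedef] at this ⊢
    simp only [Prod.fst_sub, Prod.snd_sub, Prod.smul_fst, Prod.smul_snd,
      smul_eq_mul] at this
    ring_nf at this ⊢
    linarith
  have hκne : κ ≠ 0 := by
    intro h
    rw [h, mul_zero] at hez
    exact hene z hz hez
  set h : ℝ × ℝ → ℝ := fun p => e p / κ with hhdef
  have haff : ∀ (u u' : ℝ) (p q : ℝ × ℝ), u + u' = 1 →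
      h (u • p + u' • q) = u * h p + u' * h q := by
    intro u u' p q huu
    have he : e (u • p + u' • q) = u * e p + u' * e q := by
      simp only [hedef, Prod.fst_add, Prod.snd_add, Prod.smul_fst,
        Prod.smul_snd, smul_eq_mul]
      linear_combination γ * huu
    simp only [hhdef, he]
    ring
  have hhz : h z = t := by
    simp only [hhdef, hez]
    field_simp
  have hpos : ∀ p ∈ c, 0 < h p := by
    intro p hp
    rcases lt_trichotomy (h p) 0 with hlt | heq | hgt
    · exfalso
      have hzt : 0 < h z := by rw [hhz]; exact htpos
      set u : ℝ := (-h p) / (h z - h p) with hudef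
      have hden : 0 < h z - h p := by linarith
      have hu0 : 0 ≤ u := by apply div_nonneg <;> linarith
      have hu1 : 0 ≤ 1 - u := by
        rw [hudef]
        rw [sub_nonneg, div_le_one hden]
        linarith
      have hq : u • z + (1 - u) • p ∈ c := hc hz hp hu0 hu1 (by ring)
      have hhq : h (u • z + (1 - u) • p) = 0 := by
        rw [haff u (1 - u) z p (by ring), hudef]
        field_simp
        ring
      have : e (u • z + (1 - u) • p) = 0 := by
        have := hhq
        simp only [hhdef, div_eq_zero_iff] at this
        tauto
      exact hnotin _ hq ⟨l, hlL, (hmem_iff _).mpr this⟩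
    · exact absurd (by simpa [hhdef, div_eq_zero_iff, hκne] using heq) (hene p hp)
    · exact hgt
  have hmemS : ∀ p ∈ c, h p ∈ {t : ℝ | 0 < t ∧ p - t • v ∈ ⋃₀ L} := by
    intro p hp
    refine ⟨hpos p hp, l, hlL, (hmem_iff _).mpr ?_⟩
    simp only [hedef, Prod.fst_sub, Prod.snd_sub, Prod.smul_fst, Prod.smul_snd,
      smul_eq_mul]
    have : h p * κ = e p := by
      simp only [hhdef]; field_simp
    simp only [hedef, hκdef] at this
    linarith [this]
  have hga : sInf {t : ℝ | 0 < t ∧ a - t • v ∈ ⋃₀ L} ≤ h a :=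
    csInf_le (hbdd a) (hmemS a ha)
  have hgb : sInf {t : ℝ | 0 < t ∧ b - t • v ∈ ⋃₀ L} ≤ h b :=
    csInf_le (hbdd b) (hmemS b hb)
  have : t = w * h a + w' * h b := by
    rw [← hhz, hzdef, haff w w' a b hww]
  rw [this]
  have := mul_le_mul_of_nonneg_left hga hw
  have := mul_le_mul_of_nonneg_left hgb hw'
  nlinarith [mul_le_mul_of_nonneg_left hga hw, mul_le_mul_of_nonneg_left hgb hw']

theorem stmt_1 (L : Set (Set (ℝ × ℝ))) (hLfin : L.Finite) (hLne : L.Nonempty)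
    (hlines : ∀ l ∈ L, IsLine l)
    (c : Set (ℝ × ℝ)) (hc : Convex ℝ c) (hdisj : c ∩ ⋃₀ L = ∅)
    (hhitL : ∀ a ∈ c, {t : ℝ | 0 < t ∧ a - t • ((1 : ℝ), (0 : ℝ)) ∈ ⋃₀ L}.Nonempty)
    (hhitD : ∀ a ∈ c, {t : ℝ | 0 < t ∧ a - t • ((0 : ℝ), (1 : ℝ)) ∈ ⋃₀ L}.Nonempty)
    (f : ℝ × ℝ → ℝ)
    (hf : ∀ a, f a = sInf {t : ℝ | 0 < t ∧ a - t • ((1 : ℝ), (0 : ℝ)) ∈ ⋃₀ L}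
                   + sInf {t : ℝ | 0 < t ∧ a - t • ((0 : ℝ), (1 : ℝ)) ∈ ⋃₀ L}) :
    ConcaveOn ℝ c f ∧ ∀ ε : ℝ, Convex ℝ {a ∈ c | ε ≤ f a} := by
  have h1 := g_concave L hlines c hc hdisj ((1 : ℝ), (0 : ℝ)) hhitL
  have h2 := g_concave L hlines c hc hdisj ((0 : ℝ), (1 : ℝ)) hhitD
  have hfe : f = fun a => sInf {t : ℝ | 0 < t ∧ a - t • ((1 : ℝ), (0 : ℝ)) ∈ ⋃₀ L}
      + sInf {t : ℝ | 0 < t ∧ a - t • ((0 : ℝ), (1 : ℝ)) ∈ ⋃₀ L} := funext hf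
  have hcf : ConcaveOn ℝ c f := by
    rw [hfe]
    exact h1.add h2
  exact ⟨hcf, fun ε => hcf.convex_ge ε⟩
end
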